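/- Let {C_1,…,C_M} be an (M,L)-CCC, let P be a positive divisor of M, let b^1,…,b^P be unimodular MOSs of length P, let n_1,…,n_{P+1} be nonnegative integers with sum n, and let π_0,…,π_{P−1} be permutations of {1,…,M} satisfying condition (13). For 0 ≤ j ≤ P−1, 0 ≤ ν < M/P, 1 ≤ μ ≤ P define B_{jM+νP+μ} = R(C_{π_j(νP+1)}, …, C_{π_j((ν+1)P)}; b^μ), and write B^j_t = B_{jM+t}. Let λ = min_{2 ≤ i ≤ P} n_i. Then for all j_1 ≠ j_2 (0 ≤ j_1, j_2 ≤ P−1), all 1 ≤ t_1, t_2 ≤ M, and every integer τ with |τ| < L + λ, the aperiodic cross-correlation satisfies C(B^{j_1}_{t_1}, B^{j_2}_{t_2})(τ) = 0; i.e., the collection {B^0,…,B^{P−1}} is a multiple SNC-CCC with inter-set aperiodic ZCCZ of width L + λ. -/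

import Mathlib

open scoped BigOperators ComplexConjugate

noncomputable section

/-- Zero-extension of a finite complex sequence to an integer-indexed sequence. -/
def zext {L : ℕ} (a : Fin L → ℂ) (i : ℤ) : ℂ :=
  if h : 0 ≤ i ∧ i < (L : ℤ) then a ⟨i.toNat, by omega⟩ else 0

/-- Aperiodic cross-correlation function (ACCF) of two length-`L` complex sequences. -/
def accf {L : ℕ} (a b : Fin L → ℂ) (τ : ℤ) : ℂ :=
  ∑ i : Fin L, zext a ((i : ℤ) + τ) * conj (b i)

/-- Periodic cross-correlation function of two length-`N` complex sequences. -/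
def pccf {N : ℕ} (a b : Fin N → ℂ) (τ : ℤ) : ℂ :=
  accf a b τ + accf a b (τ - (N : ℤ))

/-- ACCF of two `M × L` codes (sum of row-wise ACCFs). -/
def codeACCF {M L : ℕ} (C D : Fin M → Fin L → ℂ) (τ : ℤ) : ℂ :=
  ∑ ν : Fin M, accf (C ν) (D ν) τ

/-- Periodic cross-correlation of two `M × N` codes. -/
def codePCCF {M N : ℕ} (C D : Fin M → Fin N → ℂ) (τ : ℤ) : ℂ :=
  ∑ ν : Fin M, pccf (C ν) (D ν) τ

/-- `C : Fin M → (Fin M → Fin L → ℂ)` is an `(M,L)`-CCC. -/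
def IsCCC {M L : ℕ} (C : Fin M → Fin M → Fin L → ℂ) : Prop :=
  (∀ k₁ k₂ : Fin M, ∀ τ : ℤ, (k₁ ≠ k₂ ∨ τ ≠ 0) → codeACCF (C k₁) (C k₂) τ = 0) ∧
  (∀ k : Fin M, codeACCF (C k) (C k) 0 = (M : ℂ) * (L : ℂ))

/-- Starting column of the `p`-th data block in the construction `R`:
the block `b_{p+1}·C_{p+1}` starts after the zero blocks `n_1, …, n_{p+1}` and the
previous `p` data blocks of width `L`. -/
def Roff {P : ℕ} (L : ℕ) (n : Fin (P + 1) → ℕ) (p : Fin P) : ℕ :=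
  (∑ i : Fin (P + 1), if (i : ℕ) ≤ (p : ℕ) then n i else 0) + (p : ℕ) * L

/-- The construction
`R(C_1,…,C_P; b) = [0^{n_1} ∥ b_1·C_1 ∥ 0^{n_2} ∥ b_2·C_2 ∥ … ∥ 0^{n_P} ∥ b_P·C_P ∥ 0^{n_{P+1}}]`,
an `M × (P·L + n)` matrix.  (The data blocks are pairwise disjoint, so the column `x` entry
is `b_p · (C_p)_{r,j}` if `x = Roff p + j` for (the unique) such `p, j`, and `0` otherwise.) -/
def Rmat {M L P : ℕ} (Cs : Fin P → Fin M → Fin L → ℂ) (b : Fin P → ℂ)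
    (n : Fin (P + 1) → ℕ) : Fin M → Fin (P * L + ∑ i, n i) → ℂ :=
  fun r x => ∑ p : Fin P, ∑ j : Fin L,
    if (x : ℕ) = Roff L n p + (j : ℕ) then b p * Cs p r j else 0

/-- For `t = νP + μ` (0-indexed), the index `νP + p` of the `p`-th constituent code. -/
def blockIdx {M P : ℕ} (hP : P ∣ M) (t : Fin M) (p : Fin P) : Fin M :=
  ⟨(t : ℕ) / P * P + (p : ℕ), by
    obtain ⟨k, rfl⟩ := hP
    have hPpos : 0 < P := p.pos
    have h1 : (t : ℕ) / P < k := Nat.div_lt_of_lt_mul t.isLt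
    have h4 : (p : ℕ) < P := p.isLt
    nlinarith [h1, h4]⟩

/-- Condition (13) of the paper: for `j₁ ≠ j₂`, `π_{j₁}(i₁P+μ) ≠ π_{j₂}(i₂P+μ)`;
equivalently, images of indices with the same residue mod `P` differ. -/
def Cond13 {M P : ℕ} (π : Fin P → Equiv.Perm (Fin M)) : Prop :=
  ∀ j₁ j₂ : Fin P, j₁ ≠ j₂ → ∀ s t : Fin M, (s : ℕ) % P = (t : ℕ) % P →
    π j₁ s ≠ π j₂ t

/-- Condition (14) of the paper: if `π_{j₁}(i₁P+μ₁) = π_{j₂}(i₂P+μ₂)` for `j₁ ≠ j₂`, then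
`π_{j₁}(i₁P+μ₁+α) ≠ π_{j₂}(i₂P+μ₂+α)` for every nonzero shift `α` keeping both positions
inside their blocks. -/
def Cond14 {M P : ℕ} (π : Fin P → Equiv.Perm (Fin M)) : Prop :=
  ∀ j₁ j₂ : Fin P, j₁ ≠ j₂ → ∀ s t : Fin M, π j₁ s = π j₂ t →
    ∀ α : ℤ, α ≠ 0 →
      0 ≤ ((s : ℕ) : ℤ) % (P : ℤ) + α → ((s : ℕ) : ℤ) % (P : ℤ) + α < (P : ℤ) →
      0 ≤ ((t : ℕ) : ℤ) % (P : ℤ) + α → ((t : ℕ) : ℤ) % (P : ℤ) + α < (P : ℤ) →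
      ∀ s' t' : Fin M, ((s' : ℕ) : ℤ) = ((s : ℕ) : ℤ) + α → ((t' : ℕ) : ℤ) = ((t : ℕ) : ℤ) + α →
        π j₁ s' ≠ π j₂ t'



lemma zext_eq_sum {L : ℕ} (a : Fin L → ℂ) (y : ℤ) :
    zext a y = ∑ j : Fin L, if y = (j : ℤ) then a j else 0 := by
  unfold zext
  by_cases h : 0 ≤ y ∧ y < (L : ℤ)
  · rw [dif_pos h]
    rw [Finset.sum_eq_single (⟨y.toNat, by omega⟩ : Fin L)]
    · rw [if_pos (by simp; omega)]
    · intro j _ hj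
      rw [if_neg]
      intro hy
      exact hj (Fin.ext (by simp at hy ⊢; omega))
    · simp
  · rw [dif_neg h]
    refine (Finset.sum_eq_zero ?_).symm
    intro j _
    rw [if_neg]
    intro hy
    have := j.isLt
    omega

lemma sum_fin_ite {N : ℕ} (c : ℕ) (hc : c < N) (f : Fin N → ℂ) :
    ∑ x : Fin N, (if (x : ℕ) = c then f x else 0) = f ⟨c, hc⟩ := by
  rw [Finset.sum_eq_single (⟨c, hc⟩ : Fin N)]
  · rw [if_pos rfl]
  · intro x _ hx
    rw [if_neg (fun h => hx (Fin.ext h))]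
  · simp
lemma Roff_add_lt {L P : ℕ} (n : Fin (P + 1) → ℕ) (p : Fin P) (j : Fin L) :
    Roff L n p + (j : ℕ) < P * L + ∑ i, n i := by
  unfold Roff
  have h1 : (∑ i : Fin (P + 1), if (i : ℕ) ≤ (p : ℕ) then n i else 0) ≤ ∑ i, n i := by
    apply Finset.sum_le_sum
    intro i _
    split_ifs <;> simp
  have h2 : (p : ℕ) * L + (j : ℕ) < P * L := by
    have hp := p.isLt
    have hj := j.isLt
    nlinarith
  omega

lemma Roff_gap {L P : ℕ} (n : Fin (P + 1) → ℕ) (lam : ℕ)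
    (hlam : ∀ i : Fin (P + 1), 1 ≤ (i : ℕ) → (i : ℕ) < P → lam ≤ n i)
    (p q : Fin P) (h : (p : ℕ) < (q : ℕ)) :
    Roff L n p + (L + lam) ≤ Roff L n q := by
  unfold Roff
  have hqP := q.isLt
  have hi0 : (p : ℕ) + 1 < P + 1 := by omega
  set i0 : Fin (P + 1) := ⟨(p : ℕ) + 1, hi0⟩ with hi0def
  have hlam0 : lam ≤ n i0 := hlam i0 (by simp [hi0def]) (by simp [hi0def]; omega)
  have key : (∑ i : Fin (P + 1), if (i : ℕ) ≤ (p : ℕ) then n i else 0) + n i0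
      ≤ ∑ i : Fin (P + 1), if (i : ℕ) ≤ (q : ℕ) then n i else 0 := by
    have hsum : (∑ i : Fin (P + 1), if (i : ℕ) ≤ (p : ℕ) then n i else 0) + n i0
        = ∑ i : Fin (P + 1), ((if (i : ℕ) ≤ (p : ℕ) then n i else 0) + (if i = i0 then n i else 0)) := by
      rw [Finset.sum_add_distrib, Finset.sum_ite_eq' Finset.univ i0 n]
      simp
    rw [hsum]
    apply Finset.sum_le_sum
    intro i _
    by_cases h1 : (i : ℕ) ≤ (p : ℕ)
    · have : i ≠ i0 := by intro he; rw [he] at h1; simp [hi0def] at h1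
      rw [if_pos h1, if_neg this, if_pos (by omega)]
      simp
    · rw [if_neg h1]
      by_cases h2 : i = i0
      · rw [if_pos h2, if_pos (by subst h2; simp [hi0def]; omega), h2]; simp
      · simp [h2]
  have hmul : (p : ℕ) * L + L ≤ (q : ℕ) * L := by nlinarith
  omega
lemma zext_Rmat {M L P : ℕ} (Cs : Fin P → Fin M → Fin L → ℂ) (b : Fin P → ℂ)
    (n : Fin (P + 1) → ℕ) (r : Fin M) (y : ℤ) :
    zext (Rmat Cs b n r) y =
      ∑ p : Fin P, ∑ j : Fin L,
        if y = ((Roff L n p + (j : ℕ) : ℕ) : ℤ) then b p * Cs p r j else 0 := by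
  rw [zext_eq_sum]
  unfold Rmat
  have step : ∀ x : Fin (P * L + ∑ i, n i),
      (if y = ((x : ℕ) : ℤ) then (∑ p : Fin P, ∑ j : Fin L,
        if (x : ℕ) = Roff L n p + (j : ℕ) then b p * Cs p r j else 0) else 0)
      = ∑ p : Fin P, ∑ j : Fin L,
        (if y = ((x : ℕ) : ℤ) then (if (x : ℕ) = Roff L n p + (j : ℕ) then b p * Cs p r j else 0) else 0) := by
    intro x
    split_ifs with h
    · rfl
    · simp
  rw [Finset.sum_congr rfl (fun x _ => step x), Finset.sum_comm]
  refine Finset.sum_congr rfl (fun p _ => ?_)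
  rw [Finset.sum_comm]
  refine Finset.sum_congr rfl (fun j _ => ?_)
  have hc : Roff L n p + (j : ℕ) < P * L + ∑ i, n i := Roff_add_lt n p j
  have := sum_fin_ite (Roff L n p + (j : ℕ)) hc
    (fun x => if y = ((x : ℕ) : ℤ) then b p * Cs p r j else 0)
  calc ∑ x : Fin (P * L + ∑ i, n i),
        (if y = ((x : ℕ) : ℤ) then (if (x : ℕ) = Roff L n p + (j : ℕ) then b p * Cs p r j else 0) else 0)
      = ∑ x : Fin (P * L + ∑ i, n i),
        (if (x : ℕ) = Roff L n p + (j : ℕ) then (if y = ((x : ℕ) : ℤ) then b p * Cs p r j else 0) else 0) := by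
        refine Finset.sum_congr rfl (fun x _ => ?_)
        split_ifs <;> rfl
    _ = if y = ((Roff L n p + (j : ℕ) : ℕ) : ℤ) then b p * Cs p r j else 0 := this
lemma accf_Rmat {M L P : ℕ} (Cs1 Cs2 : Fin P → Fin M → Fin L → ℂ) (b1 b2 : Fin P → ℂ)
    (n : Fin (P + 1) → ℕ) (r : Fin M) (τ : ℤ) :
    accf (Rmat Cs1 b1 n r) (Rmat Cs2 b2 n r) τ =
      ∑ p : Fin P, ∑ q : Fin P, (b1 p * conj (b2 q)) *
        accf (Cs1 p r) (Cs2 q r) (τ + ((Roff L n q : ℕ) : ℤ) - ((Roff L n p : ℕ) : ℤ)) := by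
  have hcond : ∀ (p q : Fin P) (i j : Fin L),
      ((((Roff L n q + (i : ℕ) : ℕ) : ℤ) + τ = ((Roff L n p + (j : ℕ) : ℕ) : ℤ)) ↔
       ((i : ℤ) + (τ + ((Roff L n q : ℕ) : ℤ) - ((Roff L n p : ℕ) : ℤ)) = (j : ℤ))) := by
    intro p q i j
    push_cast
    constructor <;> intro h <;> omega
  unfold accf
  calc
    ∑ x : Fin (P * L + ∑ i, n i), zext (Rmat Cs1 b1 n r) ((x : ℤ) + τ) * conj (Rmat Cs2 b2 n r x)
      = ∑ x : Fin (P * L + ∑ i, n i), ∑ q : Fin P, ∑ i : Fin L,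
          (if (x : ℕ) = Roff L n q + (i : ℕ) then
            zext (Rmat Cs1 b1 n r) ((x : ℤ) + τ) * conj (b2 q * Cs2 q r i) else 0) := by
        refine Finset.sum_congr rfl fun x _ => ?_
        show zext (Rmat Cs1 b1 n r) ((x : ℤ) + τ) *
            conj (∑ q : Fin P, ∑ i : Fin L,
              if (x : ℕ) = Roff L n q + (i : ℕ) then b2 q * Cs2 q r i else 0) = _
        rw [map_sum, Finset.mul_sum]
        refine Finset.sum_congr rfl fun q _ => ?_
        rw [map_sum, Finset.mul_sum]
        refine Finset.sum_congr rfl fun i _ => ?_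
        rw [apply_ite conj, map_zero, mul_ite, mul_zero]
    _ = ∑ q : Fin P, ∑ i : Fin L,
          zext (Rmat Cs1 b1 n r) (((Roff L n q + (i : ℕ) : ℕ) : ℤ) + τ) * conj (b2 q * Cs2 q r i) := by
        rw [Finset.sum_comm]
        refine Finset.sum_congr rfl fun q _ => ?_
        rw [Finset.sum_comm]
        refine Finset.sum_congr rfl fun i _ => ?_
        exact sum_fin_ite (Roff L n q + (i : ℕ)) (Roff_add_lt n q i)
          (fun x => zext (Rmat Cs1 b1 n r) ((x : ℤ) + τ) * conj (b2 q * Cs2 q r i))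
    _ = ∑ q : Fin P, ∑ i : Fin L, ∑ p : Fin P, ∑ j : Fin L,
          (if ((Roff L n q + (i : ℕ) : ℕ) : ℤ) + τ = ((Roff L n p + (j : ℕ) : ℕ) : ℤ) then
            b1 p * Cs1 p r j else 0) * conj (b2 q * Cs2 q r i) := by
        refine Finset.sum_congr rfl fun q _ => Finset.sum_congr rfl fun i _ => ?_
        rw [zext_Rmat, Finset.sum_mul]
        exact Finset.sum_congr rfl fun p _ => Finset.sum_mul _ _ _
    _ = ∑ p : Fin P, ∑ q : Fin P, ∑ i : Fin L, ∑ j : Fin L,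
          (if ((Roff L n q + (i : ℕ) : ℕ) : ℤ) + τ = ((Roff L n p + (j : ℕ) : ℕ) : ℤ) then
            b1 p * Cs1 p r j else 0) * conj (b2 q * Cs2 q r i) := by
        refine (Finset.sum_congr rfl fun q _ => ?_).trans Finset.sum_comm
        exact Finset.sum_comm
    _ = ∑ p : Fin P, ∑ q : Fin P, (b1 p * conj (b2 q)) *
          accf (Cs1 p r) (Cs2 q r) (τ + ((Roff L n q : ℕ) : ℤ) - ((Roff L n p : ℕ) : ℤ)) := by
        refine Finset.sum_congr rfl fun p _ => Finset.sum_congr rfl fun q _ => ?_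
        unfold accf
        rw [Finset.mul_sum]
        refine Finset.sum_congr rfl fun i _ => ?_
        rw [zext_eq_sum, Finset.sum_mul, Finset.mul_sum]
        refine Finset.sum_congr rfl fun j _ => ?_
        have hiff := hcond p q i j
        split_ifs with h1 h2 h2
        · rw [map_mul]; ring
        · exact absurd (hiff.mp h1) h2
        · exact absurd (hiff.mpr h2) h1
        · simp

/-- Theorem 2, aperiodic ZCCZ: with `λ = min_{2 ≤ i ≤ P} n_i`
(0-indexed: the minimum of `n i` over `1 ≤ i ≤ P−1`), codes from different SNC-CCCs
`B^{j₁}`, `B^{j₂}` (`j₁ ≠ j₂`) have vanishing aperiodic cross-correlation for all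
shifts `|τ| < L + λ`. -/
theorem multiple_snc_ccc_aperiodic_zccz {M L P : ℕ} (hPpos : 0 < P) (hP : P ∣ M)
    (C : Fin M → Fin M → Fin L → ℂ) (hC : IsCCC C)
    (bs : Fin P → Fin P → ℂ)
    (hMOS : ∀ μ₁ μ₂ : Fin P, μ₁ ≠ μ₂ → ∑ i : Fin P, bs μ₁ i * conj (bs μ₂ i) = 0)
    (hUni : ∀ μ i : Fin P, ‖bs μ i‖ = 1)
    (n : Fin (P + 1) → ℕ)
    (πs : Fin P → Equiv.Perm (Fin M)) (h13 : Cond13 πs)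
    (Bc : Fin P → Fin M → Fin M → Fin (P * L + ∑ i, n i) → ℂ)
    (hB : ∀ j : Fin P, ∀ t : Fin M,
      Bc j t = Rmat (fun p => C (πs j (blockIdx hP t p)))
        (bs ⟨(t : ℕ) % P, Nat.mod_lt _ hPpos⟩) n) :
    ∀ j₁ j₂ : Fin P, j₁ ≠ j₂ → ∀ t₁ t₂ : Fin M, ∀ τ : ℤ,
      |τ| < (L : ℤ) + ((sInf {m : ℕ | ∃ i : Fin (P + 1), 1 ≤ (i : ℕ) ∧ (i : ℕ) < P ∧ n i = m} : ℕ) : ℤ) →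
      codeACCF (Bc j₁ t₁) (Bc j₂ t₂) τ = 0 := by
  intro j₁ j₂ hj t₁ t₂ τ hτ
  set lam : ℕ := sInf {m : ℕ | ∃ i : Fin (P + 1), 1 ≤ (i : ℕ) ∧ (i : ℕ) < P ∧ n i = m} with hlamdef
  have hlam : ∀ i : Fin (P + 1), 1 ≤ (i : ℕ) → (i : ℕ) < P → lam ≤ n i := by
    intro i h1 h2
    exact Nat.sInf_le ⟨i, h1, h2, rfl⟩
  have habs := abs_lt.mp hτ
  rw [hB j₁ t₁, hB j₂ t₂]
  unfold codeACCF
  rw [Finset.sum_congr rfl fun r _ => accf_Rmat _ _ _ _ n r τ]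
  rw [Finset.sum_comm]
  refine Finset.sum_eq_zero fun p _ => ?_
  rw [Finset.sum_comm]
  refine Finset.sum_eq_zero fun q _ => ?_
  rw [← Finset.mul_sum]
  have hzero : codeACCF (C (πs j₁ (blockIdx hP t₁ p))) (C (πs j₂ (blockIdx hP t₂ q)))
      (τ + ((Roff L n q : ℕ) : ℤ) - ((Roff L n p : ℕ) : ℤ)) = 0 := by
    apply hC.1
    rcases Nat.lt_trichotomy (p : ℕ) (q : ℕ) with hpq | hpq | hpq
    · right
      have := Roff_gap (L := L) n lam hlam p q hpq
      have hcast : ((Roff L n p : ℕ) : ℤ) + ((L : ℕ) : ℤ) + (lam : ℤ) ≤ ((Roff L n q : ℕ) : ℤ) := by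
        exact_mod_cast by omega
      omega
    · left
      have hpq' : p = q := Fin.ext hpq
      subst hpq'
      apply h13 j₁ j₂ hj
      show ((t₁ : ℕ) / P * P + (p : ℕ)) % P = ((t₂ : ℕ) / P * P + (p : ℕ)) % P
      rw [Nat.mul_comm ((t₁ : ℕ) / P) P, Nat.mul_comm ((t₂ : ℕ) / P) P,
        Nat.mul_add_mod, Nat.mul_add_mod]
    · right
      have := Roff_gap (L := L) n lam hlam q p hpq
      have hcast : ((Roff L n q : ℕ) : ℤ) + ((L : ℕ) : ℤ) + (lam : ℤ) ≤ ((Roff L n p : ℕ) : ℤ) := by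
        exact_mod_cast by omega
      omega
  exact mul_eq_zero_of_right _ hzero

end
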